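/- Let F be a standard Fréchet random variable with tail index 1, and let δ ∈ (1,2) and η > 0. Then lim_{a→∞} a · E[min(η², (F/a)^{2/δ})] = 2η^{2-δ}/(2-δ). -/

import Mathlib

/-!
By the layer-cake formula, with `q = δ / 2` the inverse of the exponent `2 / δ`,
`E[min (η², (F/a)^(2/δ))] = ∫₀^{η²} P(F > a t^q) dt = ∫₀^{η²} (1 - exp (-t^(-q) / a)) dt`.
Since `1 - exp (-x) ≤ x`, the integrands of `a · (…)` are dominated by `t^(-q)`, which is
integrable near `0` because `q < 1`, and they converge pointwise to `t^(-q)`. Dominated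
convergence gives the limit `∫₀^{η²} t^(-q) dt = 2 η^(2-δ) / (2-δ)`.
-/

open MeasureTheory ProbabilityTheory Filter Real Set
open scoped Topology

lemma tendsto_mul_one_sub_exp_neg_div (c : ℝ) :
    Tendsto (fun a : ℝ => a * (1 - exp (-(c / a)))) atTop (𝓝 c) := by
  have hderiv : HasDerivAt (fun u : ℝ => 1 - exp (-(c * u))) c 0 := by
    simpa using (((hasDerivAt_id (0 : ℝ)).const_mul c).neg.exp).const_sub 1
  have hslope := hderiv.tendsto_slope.comp
    (tendsto_inv_atTop_nhdsGT_zero.mono_right (nhdsGT_le_nhdsNE 0))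
  refine hslope.congr fun a => ?_
  simp [slope_def_field, div_eq_mul_inv, mul_comm]

lemma tendsto_integral_mul_one_sub_exp_neg_div {α : Type*} [MeasurableSpace α] {μ : Measure α}
    {f : α → ℝ} (hf : Integrable f μ) (hf0 : 0 ≤ᵐ[μ] f) :
    Tendsto (fun a : ℝ => ∫ x, a * (1 - exp (-(f x / a))) ∂μ) atTop (𝓝 (∫ x, f x ∂μ)) := by
  refine tendsto_integral_filter_of_dominated_convergence f
    (Eventually.of_forall fun a => ?_) ?_ hf
    (Eventually.of_forall fun x => tendsto_mul_one_sub_exp_neg_div (f x))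
  · exact (by fun_prop : Continuous fun y : ℝ => a * (1 - exp (-(y / a)))).comp_aestronglyMeasurable
      hf.aestronglyMeasurable
  · filter_upwards [eventually_gt_atTop 0] with a ha
    filter_upwards [hf0] with x hx
    have hexp_le : exp (-(f x / a)) ≤ 1 := exp_le_one_iff.mpr (by simpa using div_nonneg hx ha.le)
    rw [norm_of_nonneg (mul_nonneg ha.le (by linarith))]
    calc a * (1 - exp (-(f x / a))) ≤ a * (f x / a) :=
          mul_le_mul_of_nonneg_left (by linarith [add_one_le_exp (-(f x / a))]) ha.le
      _ = f x := mul_div_cancel₀ _ ha.ne'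

lemma integral_Ioo_rpow {r M : ℝ} (hr : -1 < r) (hM : 0 ≤ M) :
    ∫ t in Ioo 0 M, t ^ r = M ^ (r + 1) / (r + 1) := by
  rw [← integral_Ioc_eq_integral_Ioo, ← intervalIntegral.integral_of_le hM, integral_rpow (.inl hr),
    zero_rpow (by linarith), sub_zero]

lemma integral_min_eq_setIntegral_measureReal_lt {Ω : Type*} [MeasurableSpace Ω] {μ : Measure Ω}
    [IsFiniteMeasure μ] {X : Ω → ℝ} (hX : AEMeasurable X μ) (hX0 : 0 ≤ᵐ[μ] X) {M : ℝ} (hM : 0 ≤ M) :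
    ∫ ω, min M (X ω) ∂μ = ∫ t in Ioo 0 M, μ.real {ω | t < X ω} := by
  have hnn : 0 ≤ᵐ[μ] fun ω => min M (X ω) := by
    filter_upwards [hX0] with ω hω using le_min hM hω
  have hint : Integrable (fun ω => min M (X ω)) μ := by
    refine (integrable_const M).mono' (aemeasurable_const.min hX).aestronglyMeasurable ?_
    filter_upwards [hnn] with ω hω
    rw [norm_of_nonneg hω]
    exact min_le_left _ _
  rw [hint.integral_eq_integral_meas_lt hnn, ← integral_indicator measurableSet_Ioo,
    ← integral_indicator measurableSet_Ioi]
  congr 1 with t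
  by_cases htM : t < M <;> by_cases ht : 0 < t <;> simp [indicator, ht, htM]

lemma lt_div_rpow_iff {p a t x : ℝ} (hp : 0 < p) (ha : 0 < a) (ht : 0 ≤ t) (hx : 0 ≤ x) :
    t < (x / a) ^ p ↔ a * t ^ p⁻¹ < x := by
  rw [← rpow_inv_lt_iff_of_pos ht (div_nonneg hx ha.le) hp, lt_div_iff₀ ha, mul_comm]

lemma ae_pos_of_measure_le_zero_eq_zero {Ω : Type*} [MeasurableSpace Ω] {μ : Measure Ω}
    {F : Ω → ℝ} (h : μ {ω | F ω ≤ 0} = 0) : ∀ᵐ ω ∂μ, 0 < F ω := by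
  simpa [ae_iff] using h

section Frechet

variable {Ω : Type*} [MeasureSpace Ω] [IsProbabilityMeasure (ℙ : Measure Ω)] {F : Ω → ℝ}

lemma frechet_measureReal_lt (hmeas : Measurable F)
    (hcdf : ∀ s : ℝ, 0 < s →
      (ℙ : Measure Ω) {ω | F ω ≤ s} = ENNReal.ofReal (exp (-1 / s)))
    {s : ℝ} (hs : 0 < s) : (ℙ : Measure Ω).real {ω | s < F ω} = 1 - exp (-1 / s) := by
  have hcompl : {ω | s < F ω} = {ω | F ω ≤ s}ᶜ := by ext; simp
  rw [hcompl, probReal_compl_eq_one_sub (measurableSet_le hmeas measurable_const),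
    measureReal_def, hcdf s hs, ENNReal.toReal_ofReal (exp_nonneg _)]

lemma frechet_measureReal_lt_div_rpow (hmeas : Measurable F)
    (hcdf : ∀ s : ℝ, 0 < s →
      (ℙ : Measure Ω) {ω | F ω ≤ s} = ENNReal.ofReal (exp (-1 / s)))
    (hpos : ∀ᵐ ω, 0 < F ω) {p a t : ℝ} (hp : 0 < p) (ha : 0 < a) (ht : 0 < t) :
    (ℙ : Measure Ω).real {ω | t < (F ω / a) ^ p} = 1 - exp (-(t ^ (-p⁻¹) / a)) := by
  have hevent : {ω | t < (F ω / a) ^ p} =ᵐ[ℙ] {ω | a * t ^ p⁻¹ < F ω} := by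
    filter_upwards [hpos] with ω hω
    exact propext (lt_div_rpow_iff hp ha ht.le hω.le)
  rw [measureReal_congr hevent, frechet_measureReal_lt hmeas hcdf (by positivity), rpow_neg ht.le]
  congr 2
  field_simp

end Frechet

/-- For a standard Fréchet random variable `F` with tail index 1, `δ ∈ (1,2)` and `η > 0`,
`lim_{a→∞} a · E[min (η², (F/a)^(2/δ))] = 2 η^(2-δ)/(2-δ)`. -/
theorem frechet_second_moment_computation {Ω : Type*} [MeasureSpace Ω]
    [IsProbabilityMeasure (ℙ : Measure Ω)]
    (F : Ω → ℝ) (hmeas : Measurable F)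
    (hcdf : ∀ s : ℝ, 0 < s →
      (ℙ : Measure Ω) {ω | F ω ≤ s} = ENNReal.ofReal (Real.exp (-1 / s)))
    (hcdf0 : ∀ s : ℝ, s ≤ 0 → (ℙ : Measure Ω) {ω | F ω ≤ s} = 0)
    (δ η : ℝ) (hδ : δ ∈ Set.Ioo (1 : ℝ) 2) (hη : 0 < η) :
    Tendsto (fun a : ℝ => a * ∫ ω, min (η ^ 2) ((F ω / a) ^ (2 / δ)) ∂(ℙ : Measure Ω))
      atTop (𝓝 (2 * η ^ (2 - δ) / (2 - δ))) := by
  obtain ⟨hδ1, hδ2⟩ := hδ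
  have hpos := ae_pos_of_measure_le_zero_eq_zero (hcdf0 0 le_rfl)
  have hp : 0 < 2 / δ := by positivity
  have hr : -1 < -(2 / δ)⁻¹ := by rw [inv_div]; linarith
  have hlayer : ∀ a > 0, a * ∫ ω, min (η ^ 2) ((F ω / a) ^ (2 / δ)) ∂ℙ
      = ∫ t in Ioo 0 (η ^ 2), a * (1 - exp (-(t ^ (-(2 / δ)⁻¹) / a))) := by
    intro a ha
    have hX0 : 0 ≤ᵐ[ℙ] fun ω => (F ω / a) ^ (2 / δ) := by
      filter_upwards [hpos] with ω hω
      exact rpow_nonneg (div_pos hω ha).le _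
    rw [integral_min_eq_setIntegral_measureReal_lt (by fun_prop) hX0 (by positivity),
      ← integral_const_mul]
    refine setIntegral_congr_fun measurableSet_Ioo fun t ht => ?_
    rw [frechet_measureReal_lt_div_rpow hmeas hcdf hpos hp ha ht.1]
  have hlim := tendsto_integral_mul_one_sub_exp_neg_div
    ((intervalIntegral.intervalIntegrable_rpow' (b := η ^ 2) hr).1.mono_set Ioo_subset_Ioc_self)
    (ae_restrict_of_forall_mem measurableSet_Ioo fun t ht => (rpow_pos_of_pos ht.1 _).le)
  have hvalue : (η ^ 2) ^ (-(2 / δ)⁻¹ + 1) / (-(2 / δ)⁻¹ + 1) = 2 * η ^ (2 - δ) / (2 - δ) := by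
    have hexp : -(2 / δ)⁻¹ + 1 = (2 - δ) / 2 := by rw [inv_div]; ring
    rw [hexp, ← rpow_natCast, ← rpow_mul hη.le]
    field_simp
    ring_nf
  rw [integral_Ioo_rpow hr (by positivity), hvalue] at hlim
  exact hlim.congr' (eventually_gt_atTop 0 |>.mono fun a ha => (hlayer a ha).symm)
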